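/- For every x > b, g(x)·Φ'(x) − (λ+δ)·Φ(x) + λ·∫₀ˣ Φ(x−y)·α·e^{−αy} dy ≤ 0. -/

import Mathlib

/-!
Fix `x > b` and put `c = ψ'(x)`. Since `Φ' = 1` beyond `b`, multiplying the claim by `c > 0`
and subtracting the equation for `ψ` at `x` reduces it to
`(λ+δ) W(x) - λ ∫₀ˣ W(x-y) α e^{-αy} dy ≤ 0` for `W = ψ - c Φ`.
On `[b, x]` the convexity of `ψ` gives `W(z) ≥ W(x)`, and on `[0, b]` we have
`W = (1 - c/ψ'(b)) ψ ≥ W(b)` because `c ≥ ψ'(b)` and `ψ` increases; so `W(x)` is the minimum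
of `W` on `[0, x]`, and it is `≤ 0`. As the kernel has mass `1 - e^{-αx} ≤ 1`, the integral is
`≥ W(x)`, which leaves `δ W(x) ≤ 0`.
The positivity of `ψ'(b)`, needed for `Φ` to make sense, comes from the same equation at `b`.
-/

open Set MeasureTheory Real

noncomputable section

def expConv (α : ℝ) (F : ℝ → ℝ) (x : ℝ) : ℝ :=
  ∫ y in (0:ℝ)..x, F (x - y) * (α * exp (-α * y))

section expConv

lemma integral_exp_density (α x : ℝ) :
    ∫ y in (0:ℝ)..x, α * exp (-α * y) = 1 - exp (-α * x) := by
  have hderiv (y : ℝ) : HasDerivAt (fun y => -exp (-α * y)) (α * exp (-α * y)) y := by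
    have h := (((hasDerivAt_id y).const_mul (-α)).exp).fun_neg
    simp only [id, mul_one] at h
    exact h.congr_deriv (by ring)
  rw [intervalIntegral.integral_eq_sub_of_hasDerivAt (fun y _ => hderiv y)
    ((by fun_prop : Continuous fun y : ℝ => α * exp (-α * y)).intervalIntegrable 0 x)]
  simp only [mul_zero, exp_zero]
  ring

lemma expConv_const (α c x : ℝ) : expConv α (fun _ => c) x = c * (1 - exp (-α * x)) := by
  rw [expConv, intervalIntegral.integral_const_mul, integral_exp_density]

variable {α x : ℝ} {F G : ℝ → ℝ}

lemma intervalIntegrable_expConv (hx : 0 ≤ x) (hF : ContinuousOn F (Icc 0 x)) :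
    IntervalIntegrable (fun y => F (x - y) * (α * exp (-α * y))) volume 0 x := by
  refine ContinuousOn.intervalIntegrable (ContinuousOn.mul ?_ (by fun_prop))
  refine hF.comp (by fun_prop) fun y hy => ?_
  rw [uIcc_of_le hx] at hy
  exact ⟨by linarith [hy.2], by linarith [hy.1]⟩

lemma expConv_sub_const_mul (c : ℝ) (hx : 0 ≤ x) (hF : ContinuousOn F (Icc 0 x))
    (hG : ContinuousOn G (Icc 0 x)) :
    expConv α (fun z => G z - c * F z) x = expConv α G x - c * expConv α F x := by
  simp only [expConv, sub_mul, mul_assoc]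
  rw [intervalIntegral.integral_sub (intervalIntegrable_expConv hx hG)
    ((intervalIntegrable_expConv hx hF).const_mul c), intervalIntegral.integral_const_mul]

lemma expConv_mono (hα : 0 ≤ α) (hx : 0 ≤ x) (hF : ContinuousOn F (Icc 0 x))
    (hG : ContinuousOn G (Icc 0 x)) (hFG : ∀ z ∈ Icc 0 x, F z ≤ G z) :
    expConv α F x ≤ expConv α G x :=
  intervalIntegral.integral_mono_on hx (intervalIntegrable_expConv hx hF)
    (intervalIntegrable_expConv hx hG) fun y hy =>
      mul_le_mul_of_nonneg_right (hFG _ ⟨by linarith [hy.2], by linarith [hy.1]⟩)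
        (by positivity)

lemma expConv_le_of_le {M : ℝ} (hα : 0 ≤ α) (hx : 0 ≤ x) (hF : ContinuousOn F (Icc 0 x))
    (hFM : ∀ z ∈ Icc 0 x, F z ≤ M) : expConv α F x ≤ M * (1 - exp (-α * x)) :=
  expConv_const α M x ▸ expConv_mono hα hx hF continuousOn_const hFM

lemma le_expConv_of_le {m : ℝ} (hα : 0 ≤ α) (hx : 0 ≤ x) (hF : ContinuousOn F (Icc 0 x))
    (hmF : ∀ z ∈ Icc 0 x, m ≤ F z) : m * (1 - exp (-α * x)) ≤ expConv α F x :=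
  expConv_const α m x ▸ expConv_mono hα hx continuousOn_const hF hmF

end expConv

section RenewalEquation

variable {lam del α a p x : ℝ} {F G : ℝ → ℝ}

lemma pos_of_renewal_eq (hlam : 0 < lam) (hdel : 0 ≤ del) (hα : 0 ≤ α) (hx : 0 ≤ x)
    (ha : 0 ≤ a) (hG : ContinuousOn G (Icc 0 x)) (hGmax : ∀ z ∈ Icc 0 x, G z ≤ G x)
    (hGx : 0 < G x) (heq : a * p - (lam + del) * G x + lam * expConv α G x = 0) : 0 < p := by
  have hconv := expConv_le_of_le hα hx hG hGmax
  have hap : 0 < a * p := by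
    nlinarith [mul_le_mul_of_nonneg_left hconv hlam.le,
      mul_pos (mul_pos hlam hGx) (exp_pos (-α * x))]
  exact pos_of_mul_pos_right hap ha

lemma renewal_generator_nonpos {c : ℝ} (hlam : 0 ≤ lam) (hdel : 0 ≤ del) (hα : 0 ≤ α)
    (hx : 0 ≤ x) (hc : 0 < c) (hF : ContinuousOn F (Icc 0 x)) (hG : ContinuousOn G (Icc 0 x))
    (heq : a * c - (lam + del) * G x + lam * expConv α G x = 0)
    (hmin : ∀ z ∈ Icc 0 x, G x - c * F x ≤ G z - c * F z) (hneg : G x - c * F x ≤ 0) :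
    a - (lam + del) * F x + lam * expConv α F x ≤ 0 := by
  have hW := le_expConv_of_le (F := fun z => G z - c * F z) hα hx
    (hG.sub (hF.const_smul c)) hmin
  rw [expConv_sub_const_mul c hx hF hG] at hW
  have hmass : 0 ≤ -(G x - c * F x) * exp (-α * x) :=
    mul_nonneg (neg_nonneg.mpr hneg) (exp_pos _).le
  refine nonpos_of_mul_nonpos_right ?_ hc
  nlinarith [mul_le_mul_of_nonneg_left hW hlam, mul_nonpos_of_nonneg_of_nonpos hdel hneg]

end RenewalEquation

section Tangent

variable {f f' f'' : ℝ → ℝ} {a x : ℝ}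

lemma image_sub_le_mul_sub_of_secondDeriv_nonneg
    (hf : ∀ t ∈ Icc a x, HasDerivAt f (f' t) t)
    (hf' : ∀ t ∈ Icc a x, HasDerivAt f' (f'' t) t) (hf'' : ∀ t ∈ Ioo a x, 0 ≤ f'' t)
    (z : ℝ) (hz : z ∈ Icc a x) : f x - f z ≤ f' x * (x - z) := by
  have hxI : x ∈ Icc a x := ⟨hz.1.trans hz.2, le_rfl⟩
  have hf'mono : MonotoneOn f' (Icc a x) :=
    monotoneOn_of_hasDerivWithinAt_nonneg (convex_Icc a x)
      (fun t ht => (hf' t ht).continuousAt.continuousWithinAt)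
      (fun t ht => (hf' t (interior_subset ht)).hasDerivWithinAt)
      (fun t ht => hf'' t (by rwa [interior_Icc] at ht))
  refine (convex_Icc a x).image_sub_le_mul_sub_of_deriv_le
    (fun t ht => (hf t ht).continuousAt.continuousWithinAt)
    (fun t ht => (hf t (interior_subset ht)).differentiableAt.differentiableWithinAt)
    (fun t ht => ?_) z hz x hxI hz.2
  rw [(hf t (interior_subset ht)).deriv]
  exact hf'mono (interior_subset ht) hxI (interior_subset ht).2

end Tangent

def smoothFit (ψ ψ' : ℝ → ℝ) (b x : ℝ) : ℝ :=
  if x ≤ b then ψ x / ψ' b else x - b + ψ b / ψ' b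

section smoothFit

variable {ψ ψ' : ℝ → ℝ} {b c x : ℝ}

lemma smoothFit_of_le (hx : x ≤ b) : smoothFit ψ ψ' b x = ψ x / ψ' b := if_pos hx

lemma smoothFit_of_ge (hx : b ≤ x) : smoothFit ψ ψ' b x = x - b + ψ b / ψ' b := by
  rcases eq_or_lt_of_le hx with rfl | hx
  · rw [smoothFit_of_le le_rfl, sub_self, zero_add]
  · exact if_neg (not_le.mpr hx)

lemma continuousOn_smoothFit {s : Set ℝ} (hψ : ContinuousOn ψ s) :
    ContinuousOn (smoothFit ψ ψ' b) s := by
  refine ContinuousOn.if (fun z hz => ?_) ((hψ.mono inter_subset_left).div_const _)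
    (by fun_prop)
  rw [show {z : ℝ | z ≤ b} = Iic b from rfl, frontier_Iic] at hz
  rw [mem_singleton_iff.mp hz.2, sub_self, zero_add]

lemma hasDerivAt_smoothFit (hx : b < x) : HasDerivAt (smoothFit ψ ψ' b) 1 x := by
  have hev : smoothFit ψ ψ' b =ᶠ[nhds x] fun t => t - b + ψ b / ψ' b := by
    filter_upwards [eventually_gt_nhds hx] with t ht using smoothFit_of_ge ht.le
  simpa using (((hasDerivAt_id x).sub_const b).add_const _).congr_of_eventuallyEq hev

lemma sub_mul_smoothFit_of_le (c : ℝ) {z : ℝ} (hzb : z ≤ b) :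
    ψ z - c * smoothFit ψ ψ' b z = (1 - c / ψ' b) * ψ z := by
  rw [smoothFit_of_le hzb]
  ring

lemma sub_mul_smoothFit_le_of_le (hψ'b : 0 < ψ' b) (hc : ψ' b ≤ c) {z : ℝ} (hzb : z ≤ b)
    (hψz : ψ z ≤ ψ b) :
    ψ b - c * smoothFit ψ ψ' b b ≤ ψ z - c * smoothFit ψ ψ' b z := by
  rw [sub_mul_smoothFit_of_le c le_rfl, sub_mul_smoothFit_of_le c hzb]
  exact mul_le_mul_of_nonpos_left hψz (sub_nonpos.mpr ((one_le_div hψ'b).mpr hc))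

lemma sub_mul_smoothFit_le_of_ge {z : ℝ} (hbz : b ≤ z) (hzx : z ≤ x)
    (htangent : ψ x - ψ z ≤ c * (x - z)) :
    ψ x - c * smoothFit ψ ψ' b x ≤ ψ z - c * smoothFit ψ ψ' b z := by
  rw [smoothFit_of_ge hbz, smoothFit_of_ge (hbz.trans hzx)]
  linarith

lemma sub_mul_smoothFit_le (hψ'b : 0 < ψ' b) (hc : ψ' b ≤ c) (hbx : b ≤ x)
    (hψmax : ∀ z ∈ Icc 0 b, ψ z ≤ ψ b)
    (htangent : ∀ z ∈ Icc b x, ψ x - ψ z ≤ c * (x - z))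
    (z : ℝ) (hz : z ∈ Icc 0 x) :
    ψ x - c * smoothFit ψ ψ' b x ≤ ψ z - c * smoothFit ψ ψ' b z := by
  rcases le_total z b with hzb | hbz
  · exact (sub_mul_smoothFit_le_of_ge le_rfl hbx (htangent b ⟨le_rfl, hbx⟩)).trans
      (sub_mul_smoothFit_le_of_le hψ'b hc hzb (hψmax z ⟨hz.1, hzb⟩))
  · exact sub_mul_smoothFit_le_of_ge hbz hz.2 (htangent z ⟨hbz, hz.2⟩)

lemma sub_mul_smoothFit_nonpos (hψ'b : 0 < ψ' b) (hc : ψ' b ≤ c) (hψb : 0 ≤ ψ b)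
    (hbx : b ≤ x)
    (htangent : ψ x - ψ b ≤ c * (x - b)) : ψ x - c * smoothFit ψ ψ' b x ≤ 0 := by
  refine (sub_mul_smoothFit_le_of_ge le_rfl hbx htangent).trans ?_
  rw [sub_mul_smoothFit_of_le c le_rfl]
  exact mul_nonpos_of_nonpos_of_nonneg (sub_nonpos.mpr ((one_le_div hψ'b).mpr hc)) hψb

end smoothFit

theorem stmt_14_general (lam del al b : ℝ) (g ψ ψ' ψ'' Φ : ℝ → ℝ)
    (hlam : 0 < lam) (hdel : 0 < del) (hal : 0 < al)
    (hgpos : ∀ x ≥ (0:ℝ), 0 ≤ g x)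
    (hψd : ∀ x ≥ (0:ℝ), HasDerivAt ψ (ψ' x) x)
    (hψd2 : ∀ x ≥ (0:ℝ), HasDerivAt ψ' (ψ'' x) x)
    (hψmono : StrictMonoOn ψ (Set.Ici 0))
    (hψ0 : 0 ≤ ψ 0)
    (hψeq : ∀ x > (0:ℝ),
      g x * ψ' x - (lam + del) * ψ x
        + lam * ∫ y in (0:ℝ)..x, ψ (x - y) * (al * Real.exp (-al * y)) = 0)
    (hb : 0 < b)
    (hbmin : ∀ x ≥ (0:ℝ), ψ' b ≤ ψ' x)
    (hψ'' : ∀ x > b, 0 ≤ ψ'' x)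
    (hΦ : ∀ x, Φ x = if x ≤ b then ψ x / ψ' b else x - b + ψ b / ψ' b) :
    ∀ x > b,
      g x * deriv Φ x - (lam + del) * Φ x
        + lam * ∫ y in (0:ℝ)..x, Φ (x - y) * (al * Real.exp (-al * y)) ≤ 0 := by
  intro x hx
  obtain rfl : Φ = smoothFit ψ ψ' b := funext hΦ
  have hx0 : 0 < x := hb.trans hx
  have hψc : ContinuousOn ψ (Ici 0) := fun z hz => (hψd z hz).continuousAt.continuousWithinAt
  have hψmax : ∀ z ∈ Icc 0 b, ψ z ≤ ψ b := fun z hz => hψmono.monotoneOn hz.1 hb.le hz.2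
  have hψb : 0 < ψ b := hψ0.trans_lt (hψmono self_mem_Ici hb.le hb)
  have hψ'b : 0 < ψ' b := pos_of_renewal_eq hlam hdel.le hal.le hb.le (hgpos b hb.le)
    (hψc.mono Icc_subset_Ici_self) hψmax hψb (hψeq b hb)
  have htangent : ∀ z ∈ Icc b x, ψ x - ψ z ≤ ψ' x * (x - z) :=
    image_sub_le_mul_sub_of_secondDeriv_nonneg (fun t ht => hψd t (hb.le.trans ht.1))
      (fun t ht => hψd2 t (hb.le.trans ht.1)) (fun t ht => hψ'' t ht.1)
  have hc : ψ' b ≤ ψ' x := hbmin x hx0.le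
  rw [(hasDerivAt_smoothFit hx).deriv, mul_one]
  exact renewal_generator_nonpos hlam.le hdel.le hal.le hx0.le (hψ'b.trans_le hc)
    ((continuousOn_smoothFit hψc).mono Icc_subset_Ici_self) (hψc.mono Icc_subset_Ici_self)
    (hψeq x hx0) (sub_mul_smoothFit_le hψ'b hc hx.le hψmax htangent)
    (sub_mul_smoothFit_nonpos hψ'b hc hψb.le hx.le (htangent b ⟨le_rfl, hx.le⟩))

/-- For every x > b,
g(x)Φ'(x) − (λ+δ)Φ(x) + λ∫₀ˣ Φ(x−y)αe^{−αy}dy ≤ 0. -/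
theorem stmt_14 (lam del al b : ℝ) (g g' ψ ψ' ψ'' Φ : ℝ → ℝ)
    (hlam : 0 < lam) (hdel : 0 < del) (hal : 0 < al)
    (hg : ∀ x ≥ (0:ℝ), HasDerivAt g (g' x) x)
    (hg'c : ContinuousOn g' (Set.Ici 0))
    (hgpos : ∀ x ≥ (0:ℝ), 0 ≤ g x)
    (hψd : ∀ x ≥ (0:ℝ), HasDerivAt ψ (ψ' x) x)
    (hψd2 : ∀ x ≥ (0:ℝ), HasDerivAt ψ' (ψ'' x) x)
    (hψ''c : ContinuousOn ψ'' (Set.Ici 0))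
    (hψmono : StrictMonoOn ψ (Set.Ici 0))
    (hψ0 : 0 ≤ ψ 0)
    (hψeq : ∀ x > (0:ℝ),
      g x * ψ' x - (lam + del) * ψ x
        + lam * ∫ y in (0:ℝ)..x, ψ (x - y) * (al * Real.exp (-al * y)) = 0)
    (hb : 0 < b)
    (hbmin : ∀ x ≥ (0:ℝ), ψ' b ≤ ψ' x)
    (hψ'' : ∀ x > b, 0 ≤ ψ'' x)
    (hΦ : ∀ x, Φ x = if x ≤ b then ψ x / ψ' b else x - b + ψ b / ψ' b) :
    ∀ x > b,
      g x * deriv Φ x - (lam + del) * Φ x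
        + lam * ∫ y in (0:ℝ)..x, Φ (x - y) * (al * Real.exp (-al * y)) ≤ 0 :=
  stmt_14_general lam del al b g ψ ψ' ψ'' Φ hlam hdel hal hgpos hψd hψd2 hψmono hψ0 hψeq hb hbmin
    hψ'' hΦ
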